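/- arXiv:1510.03622 — 2 statements merged into one kernel-verified Lean document; each statement's English description precedes it below -/
import Mathlib

section
/- Let Ψ be a standard additive character of ℚ_p and let v be a positive integer. Then for every z ∈ ℚ_p with |z|_p ≥ p, one has ∫_{ℤ_p} Ψ(z·(1 + y))·|y|_p^{v−1} dμ(y) = Ψ(z) · ((1 − p^{v−1})/(1 − p^{−v})) · |z|_p^{−v}. -/
/-!
Write `I(w) = ∫_{ℤ_p} Ψ(w y) |y|^k dy`. Splitting `ℤ_p` into `pℤ_p` and the units, and
rescaling `pℤ_p` to `ℤ_p` (which multiplies Haar measure by `p⁻¹`), gives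
`I(w) = E(w) - p⁻¹ E(p w) + p^{-(k+1)} I(p w)`, where `E(w) = ∫_{ℤ_p} Ψ(w y) dy` is `μ(ℤ_p)`
for `|w| ≤ 1` and vanishes for `|w| ≥ p` (translation by an element of `ℤ_p` on which
`Ψ(w ·)` is nontrivial). For `|w| ≥ p²` this is `I(w) = p^{-(k+1)} I(p w)`, so everything
reduces to `|w| = p`, where `I(w) = -p⁻¹ μ(ℤ_p) + p^{-(k+1)} I(0)`, and `I(0)` is obtained
from the same identity at `w = 0`.
-/

open MeasureTheory Metric
open scoped ENNReal

theorem integral_eq_zero_of_add_right_eq_smul {G E : Type*} [AddGroup G] [MeasurableSpace G]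
    [MeasurableAdd G] [NormedAddCommGroup E] [NormedSpace ℂ E] {μ : Measure G}
    [μ.IsAddRightInvariant] {g : G → E} {t : G} {c : ℂ} (hc : c ≠ 1)
    (hg : ∀ y, g (y + t) = c • g y) : ∫ y, g y ∂μ = 0 := by
  have h : ∫ y, g y ∂μ = c • ∫ y, g y ∂μ := calc
    _ = ∫ y, g (y + t) ∂μ := (integral_add_right_eq_self g t).symm
    _ = ∫ y, c • g y ∂μ := by simp_rw [hg]
    _ = c • ∫ y, g y ∂μ := integral_smul c g
  have : (1 - c) • ∫ y, g y ∂μ = 0 := by rw [sub_smul, one_smul, ← h, sub_self]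
  exact (smul_eq_zero.1 this).resolve_left (sub_ne_zero.2 hc.symm)

theorem setIntegral_closedBall_eq_zero_of_map_add_eq_mul {G : Type*} [NormedAddCommGroup G]
    [IsUltrametricDist G] [MeasurableSpace G] [BorelSpace G] {μ : Measure G}
    [μ.IsAddRightInvariant] {χ : G → ℂ} (hχ : ∀ a b, χ (a + b) = χ a * χ b) {r : ℝ} {t : G}
    (ht : ‖t‖ ≤ r) (hχt : χ t ≠ 1) : ∫ y in closedBall 0 r, χ y ∂μ = 0 := by
  have hball : ∀ y, y + t ∈ closedBall (0 : G) r ↔ y ∈ closedBall 0 r := by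
    refine Set.ext_iff.1 (?_ : (· + t) ⁻¹' closedBall (0 : G) r = closedBall 0 r)
    rw [preimage_add_right_closedBall, IsUltrametricDist.closedBall_eq_of_mem (x := 0)]
    simpa using ht
  rw [← integral_indicator measurableSet_closedBall]
  refine integral_eq_zero_of_add_right_eq_smul (t := t) hχt fun y ↦ ?_
  by_cases hy : y ∈ closedBall 0 r
  · rw [Set.indicator_of_mem hy, Set.indicator_of_mem ((hball y).2 hy), hχ, smul_eq_mul,
      mul_comm]
  · rw [Set.indicator_of_notMem hy, Set.indicator_of_notMem (mt (hball y).1 hy), smul_zero]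

namespace Padic

variable {p : ℕ} [Fact p.Prime]

lemma norm_le_inv_p_iff_lt_one (x : ℚ_[p]) : ‖x‖ ≤ (p : ℝ)⁻¹ ↔ ‖x‖ < 1 := by
  simpa using norm_le_pow_iff_norm_lt_pow_add_one x (-1)

lemma norm_eq_one_of_mem_closedBall_sdiff {y : ℚ_[p]}
    (hy : y ∈ closedBall 0 1 \ closedBall 0 (p : ℝ)⁻¹) : ‖y‖ = 1 := by
  obtain ⟨hy₁, hyₚ⟩ := hy
  rw [mem_closedBall_zero_iff, norm_le_inv_p_iff_lt_one, not_lt] at *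
  exact hy₁.antisymm hyₚ

theorem exists_norm_eq_pow_succ {x : ℚ_[p]} (hx : (p : ℝ) ≤ ‖x‖) :
    ∃ m : ℕ, ‖x‖ = (p : ℝ) ^ (m + 1) := by
  have hp : (1 : ℝ) < p := Nat.one_lt_cast.2 (Fact.out : p.Prime).one_lt
  have hx0 : x ≠ 0 := by rintro rfl; rw [norm_zero] at hx; linarith
  rw [norm_eq_zpow_neg_valuation hx0] at hx ⊢
  have : 1 ≤ -x.valuation := (zpow_le_zpow_iff_right₀ hp).1 (by simpa using hx)
  refine ⟨(-x.valuation - 1).toNat, ?_⟩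
  rw [← zpow_natCast]
  congr 1
  omega

lemma one_sub_inv_p_pow_succ_ne_zero (k : ℕ) : 1 - ((p : ℂ) ^ (k + 1))⁻¹ ≠ 0 := by
  rw [sub_ne_zero, ne_comm, inv_ne_one, ← Nat.cast_pow, Nat.cast_ne_one]
  exact (Nat.one_lt_pow k.succ_ne_zero (Fact.out : p.Prime).one_lt).ne'

lemma preimage_mul_p_closedBall (r : ℝ) :
    ((p : ℚ_[p]) * ·) ⁻¹' closedBall 0 ((p : ℝ)⁻¹ * r) = closedBall 0 r := by
  have hp : (0 : ℝ) < (p : ℝ)⁻¹ := inv_pos.2 (Nat.cast_pos.2 (Fact.out : p.Prime).pos)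
  ext y
  simp [norm_p, mul_le_mul_iff_right₀ hp]

variable [MeasurableSpace ℚ_[p]] [BorelSpace ℚ_[p]]

/-- `pℤ_p` is the kernel of the reduction `ℤ_p → ℤ/p`, hence has index `p` in `ℤ_p`. -/
theorem measure_closedBall_one_eq_mul (μ : Measure ℚ_[p]) [μ.IsAddHaarMeasure] :
    μ (closedBall 0 1) = p * μ (closedBall 0 (p : ℝ)⁻¹) := by
  borelize ℤ_[p]
  let ι : ℤ_[p] →+ ℚ_[p] := PadicInt.Coe.ringHom.toAddMonoidHom
  have hι : Topology.IsOpenEmbedding ι := PadicInt.isOpenEmbedding_coe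
  have := Measure.IsAddHaarMeasure.comap (mH := inferInstance) μ hι
  let K := (PadicInt.toZMod (p := p)).toAddMonoidHom.ker
  have hindex : K.index = p := by
    rw [AddSubgroup.index_ker, AddMonoidHom.range_eq_top.2 (ZMod.ringHom_surjective _)]
    simp
  have hK : (K : Set ℤ_[p]) = {x | ‖x‖ < 1} := by
    ext x
    simp only [K, SetLike.mem_coe, AddMonoidHom.mem_ker, RingHom.toAddMonoidHom_eq_coe,
      AddMonoidHom.coe_coe, ← RingHom.mem_ker, PadicInt.ker_toZMod]
    exact PadicInt.mem_nonunits
  have himage : ι '' K = closedBall 0 (p : ℝ)⁻¹ := by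
    ext y
    simp only [hK, mem_closedBall_zero_iff, norm_le_inv_p_iff_lt_one]
    exact ⟨fun ⟨x, hx, hxy⟩ ↦ hxy ▸ hx, fun hy ↦ ⟨⟨y, hy.le⟩, hy, rfl⟩⟩
  have hrange : ι '' Set.univ = closedBall 0 1 := by
    ext y
    simp only [Set.image_univ, mem_closedBall_zero_iff]
    exact ⟨fun ⟨x, hxy⟩ ↦ hxy ▸ x.2, fun hy ↦ ⟨⟨y, hy⟩, rfl⟩⟩
  have := K.index_mul_measure (hK ▸ measurableSet_lt (by fun_prop) (by fun_prop)) (μ.comap ι)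
  rwa [hι.measurableEmbedding.comap_apply, hι.measurableEmbedding.comap_apply, himage, hrange,
    hindex, eq_comm] at this

theorem map_mul_p_eq_smul (μ : Measure ℚ_[p]) [μ.IsAddHaarMeasure] :
    μ.map ((p : ℚ_[p]) * ·) = (p : ℝ≥0∞) • μ := by
  have hp : (p : ℚ_[p]) ≠ 0 := NeZero.ne _
  let e : ℚ_[p] ≃L[ℚ_[p]] ℚ_[p] := ContinuousLinearEquiv.smulLeft (Units.mk0 _ hp)
  have he : ⇑e = ((p : ℚ_[p]) * ·) := rfl
  have := e.isAddHaarMeasure_map μ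
  rw [← he, Measure.isAddLeftInvariant_eq_smul (μ.map e) μ]
  congr 1
  set B := closedBall (0 : ℚ_[p]) (p : ℝ)⁻¹
  have hB₀ : μ B ≠ 0 :=
    (measure_closedBall_pos μ 0 (inv_pos.2 (Nat.cast_pos.2 (Fact.out : p.Prime).pos))).ne'
  have hB : μ B ≠ ∞ := (isCompact_closedBall 0 _).measure_ne_top
  have key : (μ.map e) B = p * μ B := by
    rw [Measure.map_apply e.continuous.measurable measurableSet_closedBall, he,
      ← mul_one (p : ℝ)⁻¹, preimage_mul_p_closedBall, measure_closedBall_one_eq_mul]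
  conv at key => lhs; rw [Measure.isAddLeftInvariant_eq_smul (μ.map e) μ]
  rw [Measure.smul_apply, ENNReal.smul_def, smul_eq_mul] at key
  exact_mod_cast ENNReal.mul_left_inj hB₀ hB |>.1 key

theorem setIntegral_closedBall_inv_p_mul {E : Type*} [NormedAddCommGroup E] [NormedSpace ℝ E]
    (μ : Measure ℚ_[p]) [μ.IsAddHaarMeasure] (f : ℚ_[p] → E) (r : ℝ) :
    ∫ y in closedBall 0 ((p : ℝ)⁻¹ * r), f y ∂μ =
      (p : ℝ)⁻¹ • ∫ y in closedBall 0 r, f (p * y) ∂μ := by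
  have hp : (p : ℚ_[p]) ≠ 0 := NeZero.ne _
  rw [← preimage_mul_p_closedBall r, ← (measurableEmbedding_mulLeft₀ hp).setIntegral_map,
    map_mul_p_eq_smul, Measure.restrict_smul, integral_smul_measure, smul_smul]
  simp [(Fact.out : p.Prime).ne_zero]

variable {μ : Measure ℚ_[p]} {Ψ : ℚ_[p] → ℂ}

theorem setIntegral_closedBall_one_mul_eq_of_norm_le_one (hΨ : ∀ x : ℚ_[p], ‖x‖ ≤ 1 → Ψ x = 1)
    {w : ℚ_[p]} (hw : ‖w‖ ≤ 1) (g : ℚ_[p] → ℂ) :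
    ∫ y in closedBall 0 1, Ψ (w * y) * g y ∂μ = ∫ y in closedBall 0 1, g y ∂μ := by
  refine setIntegral_congr_fun measurableSet_closedBall fun y hy ↦ ?_
  have hwy : ‖w * y‖ ≤ 1 := by
    rw [norm_mul]
    exact mul_le_one₀ hw (norm_nonneg _) (mem_closedBall_zero_iff.1 hy)
  rw [hΨ _ hwy, one_mul]

theorem setIntegral_closedBall_one_eq_measureReal_of_norm_le_one
    (hΨ : ∀ x : ℚ_[p], ‖x‖ ≤ 1 → Ψ x = 1) {w : ℚ_[p]} (hw : ‖w‖ ≤ 1) :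
    ∫ y in closedBall 0 1, Ψ (w * y) ∂μ = μ.real (closedBall 0 1) := by
  simpa using setIntegral_closedBall_one_mul_eq_of_norm_le_one (μ := μ) hΨ hw 1

theorem setIntegral_closedBall_one_eq_zero_of_le_norm [μ.IsAddHaarMeasure]
    (hΨadd : ∀ a b : ℚ_[p], Ψ (a + b) = Ψ a * Ψ b) (hΨ : ∃ x : ℚ_[p], ‖x‖ ≤ p ∧ Ψ x ≠ 1)
    {w : ℚ_[p]} (hw : p ≤ ‖w‖) : ∫ y in closedBall 0 1, Ψ (w * y) ∂μ = 0 := by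
  obtain ⟨x, hx, hΨx⟩ := hΨ
  have hw0 : 0 < ‖w‖ := (Nat.cast_pos.2 (Fact.out : p.Prime).pos).trans_le hw
  refine setIntegral_closedBall_eq_zero_of_map_add_eq_mul (fun a b ↦ by rw [mul_add, hΨadd])
    (t := x / w) ?_ (by rwa [mul_div_cancel₀ _ (norm_pos_iff.1 hw0)])
  rw [norm_div, div_le_one hw0]
  exact hx.trans hw

theorem setIntegral_closedBall_one_mul_norm_pow_recurrence [μ.IsAddHaarMeasure]
    (hΨ : Continuous Ψ) (k : ℕ) (w : ℚ_[p]) :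
    ∫ y in closedBall 0 1, Ψ (w * y) * ((‖y‖ ^ k : ℝ) : ℂ) ∂μ =
      ∫ y in closedBall 0 1, Ψ (w * y) ∂μ - (p : ℂ)⁻¹ * ∫ y in closedBall 0 1, Ψ (p * w * y) ∂μ
      + ((p : ℂ) ^ (k + 1))⁻¹ *
        ∫ y in closedBall 0 1, Ψ (p * w * y) * ((‖y‖ ^ k : ℝ) : ℂ) ∂μ := by
  set B₁ := closedBall (0 : ℚ_[p]) 1
  set Bₚ := closedBall (0 : ℚ_[p]) (p : ℝ)⁻¹
  have hsub : Bₚ ⊆ B₁ := closedBall_subset_closedBall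
    (inv_le_one_of_one_le₀ (Nat.one_le_cast.2 (Fact.out : p.Prime).one_le))
  have hint {f : ℚ_[p] → ℂ} (hf : Continuous f) : IntegrableOn f B₁ μ :=
    hf.continuousOn.integrableOn_compact (isCompact_closedBall 0 1)
  have hscale (f : ℚ_[p] → ℂ) : ∫ y in Bₚ, f y ∂μ = (p : ℂ)⁻¹ * ∫ y in B₁, f (p * y) ∂μ := by
    simpa [Complex.real_smul] using setIntegral_closedBall_inv_p_mul μ f 1
  have hwp : ∀ y, w * (p * y) = p * w * y := fun y ↦ by ring
  have hF : ∀ y, Ψ (p * w * y) * ((‖(p : ℚ_[p]) * y‖ ^ k : ℝ) : ℂ)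
      = ((p : ℂ) ^ k)⁻¹ * (Ψ (p * w * y) * ((‖y‖ ^ k : ℝ) : ℂ)) := fun y ↦ by
    rw [norm_mul, norm_p, mul_pow]
    push_cast
    ring
  calc ∫ y in B₁, Ψ (w * y) * ((‖y‖ ^ k : ℝ) : ℂ) ∂μ
      = ∫ y in B₁ \ Bₚ, Ψ (w * y) * ((‖y‖ ^ k : ℝ) : ℂ) ∂μ
        + ∫ y in Bₚ, Ψ (w * y) * ((‖y‖ ^ k : ℝ) : ℂ) ∂μ := by
        rw [setIntegral_sdiff measurableSet_closedBall (hint (by fun_prop)) hsub, sub_add_cancel]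
    _ = ∫ y in B₁ \ Bₚ, Ψ (w * y) ∂μ + ∫ y in Bₚ, Ψ (w * y) * ((‖y‖ ^ k : ℝ) : ℂ) ∂μ := by
        congr 1
        refine setIntegral_congr_fun (measurableSet_closedBall.diff measurableSet_closedBall)
          fun y hy ↦ ?_
        simp [norm_eq_one_of_mem_closedBall_sdiff hy]
    _ = _ := by
        rw [setIntegral_sdiff measurableSet_closedBall (hint (by fun_prop)) hsub, hscale, hscale]
        simp_rw [hwp, hF, integral_const_mul]
        ring

theorem setIntegral_closedBall_one_norm_pow [μ.IsAddHaarMeasure] (k : ℕ) :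
    ∫ y in closedBall 0 1, ((‖y‖ ^ k : ℝ) : ℂ) ∂μ =
      μ.real (closedBall 0 1) * (1 - (p : ℂ)⁻¹) / (1 - ((p : ℂ) ^ (k + 1))⁻¹) := by
  have h := setIntegral_closedBall_one_mul_norm_pow_recurrence (μ := μ) (Ψ := fun _ ↦ 1)
    continuous_const k 0
  simp only [one_mul, setIntegral_const, Complex.real_smul, mul_one] at h
  rw [eq_div_iff (one_sub_inv_p_pow_succ_ne_zero k)]
  linear_combination h

theorem setIntegral_closedBall_one_mul_norm_pow_of_norm_eq [μ.IsAddHaarMeasure]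
    (hΨadd : ∀ a b : ℚ_[p], Ψ (a + b) = Ψ a * Ψ b) (hΨcont : Continuous Ψ)
    (hΨtriv : ∀ x : ℚ_[p], ‖x‖ ≤ 1 → Ψ x = 1) (hΨnontriv : ∃ x : ℚ_[p], ‖x‖ ≤ p ∧ Ψ x ≠ 1)
    (k : ℕ) {w : ℚ_[p]} (hw : ‖w‖ = p) :
    ∫ y in closedBall 0 1, Ψ (w * y) * ((‖y‖ ^ k : ℝ) : ℂ) ∂μ =
      μ.real (closedBall 0 1) * (1 - (p : ℂ) ^ k) / (1 - ((p : ℂ) ^ (k + 1))⁻¹) *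
        ((p : ℂ) ^ (k + 1))⁻¹ := by
  have hq : (p : ℂ) ^ (k + 1) - 1 ≠ 0 := fun h ↦
    one_sub_inv_p_pow_succ_ne_zero k (by rw [sub_eq_zero.1 h, inv_one, sub_self])
  have hp : (p : ℂ) ≠ 0 := NeZero.ne _
  have hpw : ‖(p : ℚ_[p]) * w‖ ≤ 1 := by
    rw [norm_mul, norm_p, hw, inv_mul_cancel₀ (NeZero.ne _)]
  rw [setIntegral_closedBall_one_mul_norm_pow_recurrence hΨcont,
    setIntegral_closedBall_one_eq_zero_of_le_norm hΨadd hΨnontriv hw.ge,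
    setIntegral_closedBall_one_eq_measureReal_of_norm_le_one hΨtriv hpw,
    setIntegral_closedBall_one_mul_eq_of_norm_le_one hΨtriv hpw,
    setIntegral_closedBall_one_norm_pow]
  field_simp
  ring

theorem setIntegral_closedBall_one_mul_norm_pow_of_le_norm [μ.IsAddHaarMeasure]
    (hΨadd : ∀ a b : ℚ_[p], Ψ (a + b) = Ψ a * Ψ b) (hΨcont : Continuous Ψ)
    (hΨtriv : ∀ x : ℚ_[p], ‖x‖ ≤ 1 → Ψ x = 1) (hΨnontriv : ∃ x : ℚ_[p], ‖x‖ ≤ p ∧ Ψ x ≠ 1)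
    (k : ℕ) {w : ℚ_[p]} (hw : (p : ℝ) ≤ ‖w‖) :
    ∫ y in closedBall 0 1, Ψ (w * y) * ((‖y‖ ^ k : ℝ) : ℂ) ∂μ =
      μ.real (closedBall 0 1) * (1 - (p : ℂ) ^ k) / (1 - ((p : ℂ) ^ (k + 1))⁻¹) *
        ((‖w‖ ^ (k + 1))⁻¹ : ℝ) := by
  have hp : (p : ℝ) ≠ 0 := NeZero.ne _
  obtain ⟨m, hm⟩ := exists_norm_eq_pow_succ hw
  induction m generalizing w with
  | zero =>
    rw [zero_add, pow_one] at hm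
    rw [setIntegral_closedBall_one_mul_norm_pow_of_norm_eq hΨadd hΨcont hΨtriv hΨnontriv k hm, hm,
      Complex.ofReal_inv, Complex.ofReal_pow, Complex.ofReal_natCast]
  | succ m ih =>
    have hpw : ‖(p : ℚ_[p]) * w‖ = (p : ℝ) ^ (m + 1) := by
      rw [norm_mul, norm_p, hm, pow_succ' _ (m + 1), inv_mul_cancel_left₀ hp]
    have hpw' : (p : ℝ) ≤ ‖(p : ℚ_[p]) * w‖ := by
      rw [hpw]
      exact le_self_pow₀ (Nat.one_le_cast.2 (Fact.out : p.Prime).one_le) m.succ_ne_zero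
    rw [setIntegral_closedBall_one_mul_norm_pow_recurrence hΨcont,
      setIntegral_closedBall_one_eq_zero_of_le_norm hΨadd hΨnontriv hw,
      setIntegral_closedBall_one_eq_zero_of_le_norm hΨadd hΨnontriv hpw', ih hpw' hpw,
      norm_mul, norm_p, mul_zero, sub_zero, zero_add, mul_left_comm]
    congr 1
    push_cast
    rw [mul_pow, mul_inv, inv_pow, inv_inv, ← mul_assoc,
      inv_mul_cancel₀ (pow_ne_zero _ (NeZero.ne _)), one_mul]

end Padic

theorem padic_oscillatory_integral_explicit_value_general
    (p : ℕ) [Fact p.Prime]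
    [MeasurableSpace ℚ_[p]] [BorelSpace ℚ_[p]]
    (μ : Measure ℚ_[p]) [μ.IsAddHaarMeasure]
    (hμ : μ {x : ℚ_[p] | ‖x‖ ≤ 1} = 1)
    (Ψ : ℚ_[p] → ℂ)
    (hΨadd : ∀ a b : ℚ_[p], Ψ (a + b) = Ψ a * Ψ b)
    (hΨcont : Continuous Ψ)
    (hΨtriv : ∀ x : ℚ_[p], ‖x‖ ≤ 1 → Ψ x = 1)
    (hΨnontriv : ∃ x : ℚ_[p], ‖x‖ ≤ p ∧ Ψ x ≠ 1)
    (v : ℕ) (hv : 0 < v) :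
    ∀ z : ℚ_[p], (p : ℝ) ≤ ‖z‖ →
      ∫ y in {y : ℚ_[p] | ‖y‖ ≤ 1}, Ψ (z * (1 + y)) * ((‖y‖ ^ (v - 1) : ℝ) : ℂ) ∂μ =
        Ψ z * ((1 - (p : ℂ) ^ (v - 1)) / (1 - (p : ℂ) ^ (-(v : ℤ)))) *
          ((‖z‖ ^ (-(v : ℤ)) : ℝ) : ℂ) := by
  intro z hz
  obtain ⟨k, rfl⟩ := Nat.exists_eq_add_one.2 hv
  have hB : {y : ℚ_[p] | ‖y‖ ≤ 1} = closedBall 0 1 := by ext; simp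
  have hB₁ : μ.real (closedBall 0 1) = 1 := by rw [measureReal_def, ← hB, hμ, ENNReal.toReal_one]
  simp_rw [hB, Nat.add_sub_cancel, mul_add, mul_one, hΨadd, mul_assoc]
  rw [integral_const_mul, Padic.setIntegral_closedBall_one_mul_norm_pow_of_le_norm hΨadd hΨcont
    hΨtriv hΨnontriv k hz, hB₁, Complex.ofReal_one, one_mul, zpow_neg, zpow_neg, zpow_natCast,
    zpow_natCast]

/-- Explicit evaluation of `∫_{ℤ_p} Ψ(z(1+y))·|y|_p^{v−1} dy` for `|z|_p ≥ p`. -/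
theorem padic_oscillatory_integral_explicit_value
    (p : ℕ) [Fact p.Prime]
    [MeasurableSpace ℚ_[p]] [BorelSpace ℚ_[p]]
    (μ : Measure ℚ_[p]) [μ.IsAddHaarMeasure]
    (hμ : μ {x : ℚ_[p] | ‖x‖ ≤ 1} = 1)
    (Ψ : ℚ_[p] → ℂ)
    (hΨadd : ∀ a b : ℚ_[p], Ψ (a + b) = Ψ a * Ψ b)
    (hΨcont : Continuous Ψ) (hΨnorm : ∀ x : ℚ_[p], ‖Ψ x‖ = 1)
    (hΨtriv : ∀ x : ℚ_[p], ‖x‖ ≤ 1 → Ψ x = 1)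
    (hΨnontriv : ∃ x : ℚ_[p], ‖x‖ ≤ p ∧ Ψ x ≠ 1)
    (v : ℕ) (hv : 0 < v) :
    ∀ z : ℚ_[p], (p : ℝ) ≤ ‖z‖ →
      ∫ y in {y : ℚ_[p] | ‖y‖ ≤ 1}, Ψ (z * (1 + y)) * ((‖y‖ ^ (v - 1) : ℝ) : ℂ) ∂μ =
        Ψ z * ((1 - (p : ℂ) ^ (v - 1)) / (1 - (p : ℂ) ^ (-(v : ℤ)))) *
          ((‖z‖ ^ (-(v : ℤ)) : ℝ) : ℂ) :=
  padic_oscillatory_integral_explicit_value_general p μ hμ Ψ hΨadd hΨcont hΨtriv hΨnontriv v hv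
end

section
/- Let f, g ∈ ℝ[x₁,…,x_n] be nonzero polynomials such that there is no constant c ∈ ℝ with f = c·g, let D = {x ∈ ℝ^n : f(x) = 0 or g(x) = 0}, and let Φ : ℝ^n → ℂ be a test function. Define E_Φ(z) = ∫_{ℝ^n ∖ D} Φ(x)·exp(2π√−1·z·f(x)/g(x)) dx for z ∈ ℝ. Then there exist a real number α > 0, an integer m ≥ 1, and a constant C > 0 such that for all z ∈ ℝ with 0 < |z| ≤ 1/2: |E_Φ(z) − ∫_{ℝ^n} Φ(x) dx| ≤ C · |z|^α · |ln|z||^{m−1}. -/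
open MeasureTheory Complex MvPolynomial
open scoped ENNReal


lemma multiset_pow_card_le_prod {s : Multiset ℝ} {a : ℝ} (ha : 0 ≤ a)
    (h : ∀ x ∈ s, a ≤ x) : a ^ Multiset.card s ≤ s.prod := by
  induction s using Multiset.induction with
  | empty => simp
  | cons x s ih =>
    rw [Multiset.prod_cons, Multiset.card_cons, pow_succ]
    have hx : a ≤ x := h x (Multiset.mem_cons_self x s)
    have h2 : a ^ Multiset.card s ≤ s.prod := ih (fun y hy => h y (Multiset.mem_cons_of_mem hy))
    calc a ^ Multiset.card s * a ≤ s.prod * x :=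
      mul_le_mul h2 hx ha (le_trans (pow_nonneg ha _) h2)
    _ = x * s.prod := mul_comm _ _

/-- 1D sublevel set estimate for polynomials. -/
lemma onevar_sublevel (p : Polynomial ℝ) (d : ℕ) (hd : p.natDegree = d) (hd1 : 1 ≤ d)
    (δ ε : ℝ) (hδ : 0 < δ) (hε : 0 < ε) (hlc : δ ≤ |p.leadingCoeff|) :
    volume {t : ℝ | |p.eval t| ≤ ε} ≤ ENNReal.ofReal (4 * d * (ε/δ) ^ ((1:ℝ)/d)) := by
  have hp0 : p ≠ 0 := by
    intro h; rw [h] at hd; simp at hd; omega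
  set P : Polynomial ℂ := p.map (algebraMap ℝ ℂ) with hP
  have hPinj : Function.Injective (algebraMap ℝ ℂ) := (algebraMap ℝ ℂ).injective
  have hP0 : P ≠ 0 := Polynomial.map_ne_zero_iff hPinj |>.2 hp0
  have hPdeg : P.natDegree = d := by
    rw [hP, Polynomial.natDegree_map_eq_of_injective hPinj, hd]
  have hsplit : P.Splits := IsAlgClosed.splits P
  have hcard : P.roots.card = d := by
    rw [(Polynomial.splits_iff_card_roots).1 hsplit, hPdeg]
  have hPlc : ‖P.leadingCoeff‖ = |p.leadingCoeff| := by
    rw [hP, Polynomial.leadingCoeff_map_of_leadingCoeff_ne_zero]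
    · simp
    · simpa using Polynomial.leadingCoeff_ne_zero.2 hp0
  have hd0 : (d:ℝ) ≠ 0 := Nat.cast_ne_zero.2 (by omega)
  set ρ : ℝ := (ε/δ) ^ ((1:ℝ)/d) with hρ
  have hρpos : 0 < ρ := Real.rpow_pos_of_pos (div_pos hε hδ) _
  have hρd : ρ ^ d = ε / δ := by
    rw [hρ, ← Real.rpow_natCast _ d, ← Real.rpow_mul (div_pos hε hδ).le, one_div,
      inv_mul_cancel₀ hd0, Real.rpow_one]
  have hsub : {t : ℝ | |p.eval t| ≤ ε} ⊆
      ⋃ r ∈ P.roots.toFinset, Metric.closedBall r.re (2*ρ) := by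
    intro t ht
    simp only [Set.mem_setOf_eq] at ht
    have hevP : P.eval (t : ℂ) = ((p.eval t : ℝ) : ℂ) := by
      rw [hP, Polynomial.eval_map]
      simpa using Polynomial.eval₂_at_apply (algebraMap ℝ ℂ) t (p := p)
    by_contra hnot
    simp only [Set.mem_iUnion, Metric.mem_closedBall, not_exists, not_le,
      Multiset.mem_toFinset] at hnot
    have hgt : ∀ x ∈ P.roots.map (fun r => ‖((t : ℂ) - r)‖), 2*ρ ≤ x := by
      intro x hx
      obtain ⟨r, hr, rfl⟩ := Multiset.mem_map.1 hx
      have h1 := hnot r hr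
      have h2 : |t - r.re| ≤ ‖((t : ℂ) - r)‖ := by
        have h3 : t - r.re = ((t : ℂ) - r).re := by simp
        rw [h3]; exact Complex.abs_re_le_norm _
      rw [Real.dist_eq] at h1
      linarith
    have hfact := hsplit.eq_prod_roots
    have hlcpos : 0 < ‖P.leadingCoeff‖ := by rw [hPlc]; linarith
    have hprodle : (P.roots.map (fun r => ‖((t : ℂ) - r)‖)).prod ≤ ε / δ := by
      have hev2 : P.eval (t:ℂ) = P.leadingCoeff * (P.roots.map (fun r => (t:ℂ) - r)).prod := by
        conv_lhs => rw [hfact]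
        rw [Polynomial.eval_mul, Polynomial.eval_C, Polynomial.eval_multiset_prod,
          Multiset.map_map]
        simp
      have habs : ‖P.leadingCoeff‖ *
          (P.roots.map (fun r => ‖((t : ℂ) - r)‖)).prod ≤ ε := by
        have := congrArg (‖·‖) hev2
        rw [hevP, Complex.norm_real, Real.norm_eq_abs, norm_mul,
          show ‖(P.roots.map (fun r => (t:ℂ) - r)).prod‖ = ((P.roots.map (fun r => (t:ℂ) - r)).map norm).prod
            from map_multiset_prod (normHom : ℂ →*₀ ℝ) _, Multiset.map_map] at this
        simp only [Function.comp_def] at this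
        rw [← this]; exact ht
      have hprodnn : 0 ≤ (P.roots.map (fun r => ‖((t : ℂ) - r)‖)).prod :=
        Multiset.prod_nonneg (by intro x hx; obtain ⟨r, _, rfl⟩ := Multiset.mem_map.1 hx
                                 exact norm_nonneg _)
      calc (P.roots.map (fun r => ‖((t : ℂ) - r)‖)).prod
          ≤ ε / ‖P.leadingCoeff‖ := by
            rw [le_div_iff₀ hlcpos]; linarith [mul_comm (‖P.leadingCoeff‖)
              (P.roots.map (fun r => ‖((t : ℂ) - r)‖)).prod]
        _ ≤ ε / δ := by gcongr; rw [hPlc]; exact hlc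
    have hge : (2*ρ) ^ d ≤ (P.roots.map (fun r => ‖((t : ℂ) - r)‖)).prod := by
      have := multiset_pow_card_le_prod (by positivity) hgt
      rwa [Multiset.card_map, hcard] at this
    have : ρ ^ d < (2*ρ) ^ d := by
      apply pow_lt_pow_left₀ (by linarith) hρpos.le (by omega)
    rw [hρd] at this
    linarith
  calc volume {t : ℝ | |p.eval t| ≤ ε}
      ≤ volume (⋃ r ∈ P.roots.toFinset, Metric.closedBall r.re (2*ρ)) := measure_mono hsub
    _ ≤ ∑ r ∈ P.roots.toFinset, volume (Metric.closedBall r.re (2*ρ)) :=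
        measure_biUnion_finset_le _ _
    _ = P.roots.toFinset.card * ENNReal.ofReal (2*(2*ρ)) := by
        simp [Real.volume_closedBall, Finset.sum_const, nsmul_eq_mul]
    _ ≤ (d : ℝ≥0∞) * ENNReal.ofReal (2*(2*ρ)) := by
        gcongr
        exact_mod_cast le_trans (Multiset.toFinset_card_le _) (le_of_eq hcard)
    _ = ENNReal.ofReal (4 * d * ρ) := by
        rw [← ENNReal.ofReal_natCast d, ← ENNReal.ofReal_mul (by positivity)]
        ring_nf

lemma vol_fiber {n : ℕ} (S : Set (Fin (n+1) → ℝ)) (hS : MeasurableSet S) :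
    volume S = ∫⁻ x' : Fin n → ℝ, volume {y : ℝ | Fin.cons y x' ∈ S} := by
  have e := (volume_preserving_piFinSuccAbove (fun _ : Fin (n+1) => ℝ) 0).symm
  have hpre : (MeasurableEquiv.piFinSuccAbove (fun _ : Fin (n+1) => ℝ) 0).symm ⁻¹' S
      = {p : ℝ × (Fin n → ℝ) | Fin.cons p.1 p.2 ∈ S} := by
    ext p
    simp [MeasurableEquiv.piFinSuccAbove, Fin.insertNthEquiv, Fin.insertNth_zero]
  have h1 := e.measure_preimage (μa := (volume : Measure ℝ).prod volume)
    (μb := volume) hS.nullMeasurableSet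
  rw [hpre] at h1
  rw [← h1, Measure.prod_apply_symm]
  · rfl
  · rw [← hpre]; exact (MeasurableEquiv.measurable _) hS

lemma box_volume (n : ℕ) (R : ℝ) (hR : 0 ≤ R) :
    volume {x : Fin n → ℝ | ∀ i, |x i| ≤ R} = ENNReal.ofReal ((2*R)^n) := by
  have : {x : Fin n → ℝ | ∀ i, |x i| ≤ R} = Set.pi Set.univ (fun _ => Set.Icc (-R) R) := by
    ext x; simp only [Set.mem_setOf_eq, Set.mem_univ_pi, Set.mem_Icc, abs_le]
  rw [this, volume_pi_pi]
  simp only [Real.volume_Icc]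
  rw [Finset.prod_const, ← ENNReal.ofReal_pow (by linarith)]
  congr 2
  · ring
  · simp

lemma meas_box (n : ℕ) (R : ℝ) : MeasurableSet {x : Fin n → ℝ | ∀ i, |x i| ≤ R} := by
  have : {x : Fin n → ℝ | ∀ i, |x i| ≤ R} = ⋂ i, {x | |x i| ≤ R} := by ext x; simp
  rw [this]
  exact MeasurableSet.iInter fun i =>
    measurableSet_le (measurable_pi_apply i).abs measurable_const

lemma meas_helper {n : ℕ} (g : MvPolynomial (Fin n) ℝ) (R ε : ℝ) :
    MeasurableSet {x : Fin n → ℝ | (∀ i, |x i| ≤ R) ∧ |eval x g| ≤ ε} := by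
  have : {x : Fin n → ℝ | (∀ i, |x i| ≤ R) ∧ |eval x g| ≤ ε}
      = {x : Fin n → ℝ | ∀ i, |x i| ≤ R} ∩ {x | |eval x g| ≤ ε} := by ext x; simp only [Set.mem_setOf_eq, Set.mem_inter_iff]
  rw [this]
  exact (meas_box n R).inter
    (measurableSet_le (MvPolynomial.continuous_eval g).measurable.abs measurable_const)

lemma mv_sublevel (n : ℕ) (g : MvPolynomial (Fin n) ℝ) (hg : g ≠ 0) (R : ℝ) (hR : 1 ≤ R) :
    ∃ C β : ℝ, 0 < C ∧ 0 < β ∧ β ≤ 1 ∧ ∀ ε : ℝ, 0 < ε →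
      volume {x : Fin n → ℝ | (∀ i, |x i| ≤ R) ∧ |eval x g| ≤ ε} ≤
        ENNReal.ofReal (C * ε ^ β) := by
  induction n with
  | zero =>
    obtain ⟨c, rfl⟩ := C_surjective (Fin 0) g
    have hc : c ≠ 0 := fun h => hg (by rw [h, map_zero])
    refine ⟨1/|c|, 1, by positivity, one_pos, le_refl 1, fun ε hε => ?_⟩
    rcases le_or_gt |c| ε with h | h
    · calc volume {x : Fin 0 → ℝ | (∀ i, |x i| ≤ R) ∧ |eval x (C c)| ≤ ε}
          ≤ volume (Set.univ : Set (Fin 0 → ℝ)) := measure_mono (Set.subset_univ _)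
        _ = ENNReal.ofReal ((2*R)^0) := by
            rw [← box_volume 0 R (by linarith)]; congr 1; ext x
            simp
        _ ≤ ENNReal.ofReal (1/|c| * ε ^ (1:ℝ)) := by
            apply ENNReal.ofReal_le_ofReal
            rw [Real.rpow_one, pow_zero]
            rw [div_mul_eq_mul_div, one_mul, le_div_iff₀ (abs_pos.2 hc)]
            linarith
    · have : {x : Fin 0 → ℝ | (∀ i, |x i| ≤ R) ∧ |eval x (C c)| ≤ ε} = ∅ := by
        ext x; simp only [Set.mem_setOf_eq, Set.mem_empty_iff_false, iff_false]
        intro ⟨_, h2⟩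
        rw [eval_C] at h2
        linarith
      rw [this]; simp
  | succ n ih =>
    have hR0 : (0:ℝ) < R := by linarith
    set q : Polynomial (MvPolynomial (Fin n) ℝ) := finSuccEquiv ℝ n g with hqdef
    have hq0 : q ≠ 0 := by
      intro h
      exact hg ((map_eq_zero_iff (finSuccEquiv ℝ n) (AlgEquiv.injective _)).1 h)
    set d : ℕ := q.natDegree with hddef
    set a : MvPolynomial (Fin n) ℝ := q.leadingCoeff with hadef
    have ha0 : a ≠ 0 := Polynomial.leadingCoeff_ne_zero.2 hq0
    obtain ⟨Ca, βa, hCa, hβa, hβa1, hIH⟩ := ih a ha0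
    have hevalcons : ∀ (y : ℝ) (x' : Fin n → ℝ),
        eval (Fin.cons y x') g = Polynomial.eval y (q.map (eval x')) := by
      intro y x'
      exact eval_eq_eval_mv_eval' x' y g
    rcases Nat.eq_zero_or_pos d with hd0 | hd1
    · -- d = 0 : g is "constant" in the first variable
      have hqC : q = Polynomial.C (q.coeff 0) := Polynomial.eq_C_of_natDegree_eq_zero hd0
      have hac : a = q.coeff 0 := by
        rw [hadef, Polynomial.leadingCoeff, hddef] at *
        rw [hd0]
      refine ⟨2*R*Ca, βa, by positivity, hβa, hβa1, fun ε hε => ?_⟩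
      have hev : ∀ (y : ℝ) (x' : Fin n → ℝ), eval (Fin.cons y x') g = eval x' a := by
        intro y x'
        rw [hevalcons y x', hac]
        conv_lhs => rw [hqC]
        simp
      rw [vol_fiber _ (meas_helper g R ε)]
      set Bad : Set (Fin n → ℝ) := {x' | (∀ j, |x' j| ≤ R) ∧ |eval x' a| ≤ ε} with hBad
      have hfib : ∀ x' : Fin n → ℝ,
          volume {y : ℝ | Fin.cons y x' ∈
              {x : Fin (n+1) → ℝ | (∀ i, |x i| ≤ R) ∧ |eval x g| ≤ ε}} ≤
            Bad.indicator (fun _ => ENNReal.ofReal (2*R)) x' := by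
        intro x'
        by_cases hb : x' ∈ Bad
        · rw [Set.indicator_of_mem hb]
          have hsub : {y : ℝ | Fin.cons y x' ∈
              {x : Fin (n+1) → ℝ | (∀ i, |x i| ≤ R) ∧ |eval x g| ≤ ε}} ⊆ Set.Icc (-R) R := by
            intro y hy
            simp only [Set.mem_setOf_eq] at hy
            exact Set.mem_Icc.2 (abs_le.1 (by simpa [Fin.cons_zero] using hy.1 0))
          refine le_trans (measure_mono hsub) ?_
          rw [Real.volume_Icc]
          apply ENNReal.ofReal_le_ofReal; ring_nf; linarith
        · have : {y : ℝ | Fin.cons y x' ∈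
              {x : Fin (n+1) → ℝ | (∀ i, |x i| ≤ R) ∧ |eval x g| ≤ ε}} = ∅ := by
            ext y
            simp only [Set.mem_setOf_eq, Set.mem_empty_iff_false, iff_false]
            rintro ⟨h1, h2⟩
            apply hb
            constructor
            · intro j; simpa [Fin.cons_succ] using h1 j.succ
            · rw [hev y x'] at h2; exact h2
          rw [this]; simp
      calc ∫⁻ x', volume {y : ℝ | Fin.cons y x' ∈
              {x : Fin (n+1) → ℝ | (∀ i, |x i| ≤ R) ∧ |eval x g| ≤ ε}}
          ≤ ∫⁻ x', Bad.indicator (fun _ => ENNReal.ofReal (2*R)) x' := lintegral_mono hfib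
        _ = ENNReal.ofReal (2*R) * volume Bad := by
            rw [lintegral_indicator_const (meas_helper a R ε)]
        _ ≤ ENNReal.ofReal (2*R) * ENNReal.ofReal (Ca * ε ^ βa) := by
            gcongr
            exact hIH ε hε
        _ ≤ ENNReal.ofReal (2*R*Ca * ε ^ βa) := by
            rw [← ENNReal.ofReal_mul (by positivity)]
            apply ENNReal.ofReal_le_ofReal; ring_nf; linarith [Real.rpow_nonneg hε.le βa]
    · -- 1 ≤ d
      set β' : ℝ := min ((1/2)*βa) ((1:ℝ)/(2*d)) with hβ'
      have hd0R : (0:ℝ) < d := by exact_mod_cast hd1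
      have hβ'pos : 0 < β' := by
        apply lt_min (by linarith) (by positivity)
      have hβ'le : β' ≤ 1 := by
        apply le_trans (min_le_right _ _)
        rw [div_le_one (by positivity)]
        have : (1:ℝ) ≤ (d:ℝ) := by exact_mod_cast hd1
        linarith
      set C' : ℝ := 2*R*Ca + 4*d*(2*R)^n + (2*R)^(n+1) with hC'
      have hC'pos : 0 < C' := by positivity
      refine ⟨C', β', hC'pos, hβ'pos, hβ'le, fun ε hε => ?_⟩
      rcases le_or_gt ε 1 with hε1 | hε1
      · -- main case : ε ≤ 1
        set δ : ℝ := ε ^ ((1:ℝ)/2) with hδdef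
        have hδpos : 0 < δ := Real.rpow_pos_of_pos hε _
        have hδδ : δ * δ = ε := by
          rw [hδdef, ← Real.rpow_add hε]
          norm_num
        have hεδ : ε / δ = δ := by
          rw [div_eq_iff (ne_of_gt hδpos), hδδ]
        rw [vol_fiber _ (meas_helper g R ε)]
        set Bad : Set (Fin n → ℝ) := {x' | (∀ j, |x' j| ≤ R) ∧ |eval x' a| ≤ δ} with hBad
        set Box : Set (Fin n → ℝ) := {x' | ∀ j, |x' j| ≤ R} with hBox
        set τ : ℝ := 4*d*(ε/δ) ^ ((1:ℝ)/d) with hτ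
        have hτpos : 0 < τ := by
          rw [hτ]
          have := Real.rpow_pos_of_pos (div_pos hε hδpos) ((1:ℝ)/d)
          positivity
        have hfib : ∀ x' : Fin n → ℝ,
            volume {y : ℝ | Fin.cons y x' ∈
                {x : Fin (n+1) → ℝ | (∀ i, |x i| ≤ R) ∧ |eval x g| ≤ ε}} ≤
              Bad.indicator (fun _ => ENNReal.ofReal (2*R)) x'
                + Box.indicator (fun _ => ENNReal.ofReal τ) x' := by
          intro x'
          by_cases hbox : x' ∈ Box
          · by_cases hbad : |eval x' a| ≤ δ
            · refine le_trans ?_ le_self_add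
              rw [Set.indicator_of_mem (by exact ⟨hbox, hbad⟩ : x' ∈ Bad)]
              have hsub : {y : ℝ | Fin.cons y x' ∈
                  {x : Fin (n+1) → ℝ | (∀ i, |x i| ≤ R) ∧ |eval x g| ≤ ε}} ⊆ Set.Icc (-R) R := by
                intro y hy
                simp only [Set.mem_setOf_eq] at hy
                exact Set.mem_Icc.2 (abs_le.1 (by simpa [Fin.cons_zero] using hy.1 0))
              refine le_trans (measure_mono hsub) ?_
              rw [Real.volume_Icc]
              apply ENNReal.ofReal_le_ofReal; ring_nf; linarith
            · refine le_trans ?_ le_add_self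
              rw [Set.indicator_of_mem hbox]
              push_neg at hbad
              have hne : eval x' a ≠ 0 := by
                intro h; rw [h] at hbad; simp at hbad; linarith
              have hdeg : (q.map (eval x')).natDegree = d :=
                Polynomial.natDegree_map_of_leadingCoeff_ne_zero _ hne
              have hlead : (q.map (eval x')).leadingCoeff = eval x' a :=
                Polynomial.leadingCoeff_map_of_leadingCoeff_ne_zero _ hne
              refine le_trans (measure_mono ?_)
                (onevar_sublevel (q.map (eval x')) d hdeg hd1 δ ε hδpos hε
                  (by rw [hlead]; exact hbad.le))
              intro y hy
              simp only [Set.mem_setOf_eq] at hy ⊢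
              rw [← hevalcons y x']
              exact hy.2
          · have : {y : ℝ | Fin.cons y x' ∈
                {x : Fin (n+1) → ℝ | (∀ i, |x i| ≤ R) ∧ |eval x g| ≤ ε}} = ∅ := by
              ext y
              simp only [Set.mem_setOf_eq, Set.mem_empty_iff_false, iff_false]
              rintro ⟨h1, _⟩
              exact hbox (fun j => by simpa [Fin.cons_succ] using h1 j.succ)
            rw [this]; simp
        have hBadmeas : MeasurableSet Bad := meas_helper a R δ
        have hBoxmeas : MeasurableSet Box := meas_box n R
        calc ∫⁻ x', volume {y : ℝ | Fin.cons y x' ∈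
                {x : Fin (n+1) → ℝ | (∀ i, |x i| ≤ R) ∧ |eval x g| ≤ ε}}
            ≤ ∫⁻ x', (Bad.indicator (fun _ => ENNReal.ofReal (2*R)) x'
                + Box.indicator (fun _ => ENNReal.ofReal τ) x') := lintegral_mono hfib
          _ = ENNReal.ofReal (2*R) * volume Bad + ENNReal.ofReal τ * volume Box := by
              rw [lintegral_add_left (measurable_const.indicator hBadmeas),
                lintegral_indicator_const hBadmeas, lintegral_indicator_const hBoxmeas]
          _ ≤ ENNReal.ofReal (2*R) * ENNReal.ofReal (Ca * δ ^ βa)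
                + ENNReal.ofReal τ * ENNReal.ofReal ((2*R)^n) := by
              gcongr
              · exact hIH δ hδpos
              · exact le_of_eq (box_volume n R (by linarith))
          _ = ENNReal.ofReal (2*R*(Ca * δ ^ βa) + τ * (2*R)^n) := by
              rw [← ENNReal.ofReal_mul (by positivity), ← ENNReal.ofReal_mul hτpos.le,
                ← ENNReal.ofReal_add (by positivity) (by positivity)]
          _ ≤ ENNReal.ofReal (C' * ε ^ β') := by
              apply ENNReal.ofReal_le_ofReal
              have hδβa : δ ^ βa = ε ^ ((1/2)*βa) := by
                rw [hδdef, ← Real.rpow_mul hε.le]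
              have hτval : τ = 4*d* ε ^ ((1/2)*((1:ℝ)/d)) := by
                rw [hτ, hεδ, hδdef, ← Real.rpow_mul hε.le]
              have h1 : ε ^ ((1/2)*βa) ≤ ε ^ β' :=
                Real.rpow_le_rpow_of_exponent_ge hε hε1 (min_le_left _ _)
              have h2 : ε ^ ((1/2)*((1:ℝ)/d)) ≤ ε ^ β' := by
                apply Real.rpow_le_rpow_of_exponent_ge hε hε1
                apply le_trans (min_le_right _ _)
                apply le_of_eq; field_simp
              have hεβ' : 0 ≤ ε ^ β' := Real.rpow_nonneg hε.le _
              rw [hδβa, hτval, hC']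
              have hpow : (0:ℝ) ≤ (2*R)^n := by positivity
              nlinarith [mul_le_mul_of_nonneg_left h1 (by positivity : (0:ℝ) ≤ 2*R*Ca),
                mul_le_mul_of_nonneg_left h2 (by positivity : (0:ℝ) ≤ 4*d*(2*R)^n),
                mul_nonneg hpow hεβ',
                mul_nonneg (by positivity : (0:ℝ) ≤ (2*R)^(n+1)) hεβ']
      · -- ε > 1
        calc volume {x : Fin (n+1) → ℝ | (∀ i, |x i| ≤ R) ∧ |eval x g| ≤ ε}
            ≤ volume {x : Fin (n+1) → ℝ | ∀ i, |x i| ≤ R} :=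
              measure_mono (fun x hx => hx.1)
          _ = ENNReal.ofReal ((2*R)^(n+1)) := box_volume (n+1) R (by linarith)
          _ ≤ ENNReal.ofReal (C' * ε ^ β') := by
              apply ENNReal.ofReal_le_ofReal
              have h1 : (1:ℝ) ≤ ε ^ β' := by
                calc (1:ℝ) = 1 ^ β' := (Real.one_rpow _).symm
                _ ≤ ε ^ β' := Real.rpow_le_rpow zero_le_one hε1.le hβ'pos.le
              have h2 : (2*R)^(n+1) ≤ C' := by
                rw [hC']
                have : (0:ℝ) ≤ 2*R*Ca := by positivity
                have : (0:ℝ) ≤ 4*d*(2*R)^n := by positivity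
                linarith
              calc (2*R)^(n+1) ≤ C' := h2
                _ = C' * 1 := (mul_one _).symm
                _ ≤ C' * ε ^ β' := by gcongr


lemma zero_locus_null (n : ℕ) (g : MvPolynomial (Fin n) ℝ) (hg : g ≠ 0) :
    volume {x : Fin n → ℝ | eval x g = 0} = 0 := by
  have hcover : {x : Fin n → ℝ | eval x g = 0} ⊆
      ⋃ k : ℕ, {x : Fin n → ℝ | (∀ i, |x i| ≤ (k+1 : ℝ)) ∧ eval x g = 0} := by
    intro x hx
    obtain ⟨k, hk⟩ := exists_nat_ge ‖x‖
    refine Set.mem_iUnion.2 ⟨k, fun i => ?_, hx⟩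
    calc |x i| = ‖x i‖ := rfl
      _ ≤ ‖x‖ := norm_le_pi_norm x i
      _ ≤ (k:ℝ) := hk
      _ ≤ (k:ℝ)+1 := by linarith
  refine measure_mono_null hcover (measure_iUnion_null fun k => ?_)
  obtain ⟨C, β, hC, hβ, hβ1, hbound⟩ := mv_sublevel n g hg (k+1) (by
    have : (0:ℝ) ≤ k := Nat.cast_nonneg k
    linarith)
  refine le_antisymm ?_ zero_le
  refine ENNReal.le_of_forall_pos_le_add (fun η hη _ => ?_)
  rw [zero_add]
  set ε : ℝ := min 1 ((η/C) ^ ((1:ℝ)/β)) with hε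
  have hηC : (0:ℝ) < η/C := div_pos hη hC
  have hεpos : 0 < ε := lt_min one_pos (Real.rpow_pos_of_pos hηC _)
  calc volume {x : Fin n → ℝ | (∀ i, |x i| ≤ (k+1 : ℝ)) ∧ eval x g = 0}
      ≤ volume {x : Fin n → ℝ | (∀ i, |x i| ≤ (k+1 : ℝ)) ∧ |eval x g| ≤ ε} := by
        apply measure_mono
        intro x ⟨h1, h2⟩
        exact ⟨h1, by rw [h2]; simpa using hεpos.le⟩
    _ ≤ ENNReal.ofReal (C * ε ^ β) := hbound ε hεpos
    _ ≤ (η : ℝ≥0∞) := by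
        have h1 : ε ^ β ≤ η/C := by
          calc ε ^ β ≤ ((η/C) ^ ((1:ℝ)/β)) ^ β :=
              Real.rpow_le_rpow hεpos.le (min_le_right _ _) hβ.le
            _ = η/C := by
              rw [← Real.rpow_mul hηC.le, one_div, inv_mul_cancel₀ hβ.ne', Real.rpow_one]
        have h2 : C * ε ^ β ≤ η := by
          rw [← le_div_iff₀' hC]; exact h1
        calc ENNReal.ofReal (C * ε ^ β) ≤ ENNReal.ofReal (η:ℝ) := ENNReal.ofReal_le_ofReal h2
          _ = (η : ℝ≥0∞) := ENNReal.ofReal_coe_nnreal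

/-- `‖exp(i·θ) − 1‖ ≤ 2‖w‖` for purely imaginary `w`. -/
lemma norm_exp_I_sub_one_le (r : ℝ) :
    ‖Complex.exp (2 * Real.pi * Complex.I * (r:ℂ)) - 1‖ ≤ 2 * (2 * Real.pi * |r|) := by
  set w : ℂ := 2 * Real.pi * Complex.I * (r:ℂ) with hw
  have hnw : ‖w‖ = 2 * Real.pi * |r| := by
    rw [hw]
    rw [norm_mul, norm_mul, norm_mul]
    simp [Complex.norm_real, Real.pi_nonneg, _root_.abs_of_nonneg Real.pi_nonneg]
  have hexp : ‖(Complex.exp w)‖ = 1 := by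
    rw [Complex.norm_exp]
    have : w.re = 0 := by rw [hw]; simp
    rw [this, Real.exp_zero]
  rcases le_or_gt (‖w‖) 1 with h | h
  · have := Complex.norm_exp_sub_one_le h
    calc ‖Complex.exp w - 1‖ = ‖(Complex.exp w - 1)‖ := rfl
      _ ≤ 2 * ‖w‖ := this
      _ = 2 * (2 * Real.pi * |r|) := by rw [hnw]
  · calc ‖Complex.exp w - 1‖ ≤ ‖Complex.exp w‖ + ‖(1:ℂ)‖ := norm_sub_le _ _
      _ = 2 := by rw [show ‖Complex.exp w‖ = 1 from hexp]; norm_num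
      _ ≤ 2 * ‖w‖ := by nlinarith [norm_nonneg w]
      _ = 2 * (2 * Real.pi * |r|) := by rw [hnw]

set_option maxHeartbeats 1000000 in
/-- Estimate for the real oscillatory integral `E_Φ(z; f/g)` near `z = 0`:
`|E_Φ(z) − ∫Φ| ≤ C·|z|^α·|ln|z||^{m−1}`. -/
theorem real_oscillatory_integral_estimate_small_z
    (n : ℕ)
    (f g : MvPolynomial (Fin n) ℝ) (hf : f ≠ 0) (hg : g ≠ 0)
    (hfg : ∀ c : ℝ, f ≠ c • g)
    (Φ : (Fin n → ℝ) → ℂ) (hΦsmooth : ContDiff ℝ (⊤ : ℕ∞) Φ) (hΦc : HasCompactSupport Φ)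
    (D : Set (Fin n → ℝ))
    (hD : D = {x | eval x f = 0 ∨ eval x g = 0})
    (E : ℝ → ℂ)
    (hE : ∀ z : ℝ, E z = ∫ x in Dᶜ,
      Φ x * Complex.exp (2 * Real.pi * Complex.I *
        ((z * (eval x f / eval x g) : ℝ) : ℂ))) :
    ∃ (α : ℝ) (m : ℕ) (C : ℝ), 0 < α ∧ 1 ≤ m ∧ 0 < C ∧
      ∀ z : ℝ, 0 < |z| → |z| ≤ 1 / 2 →
        ‖E z - ∫ x, Φ x‖ ≤ C * |z| ^ α * _root_.abs (Real.log |z|) ^ (m - 1) := by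
  classical
  have hΦcont : Continuous Φ := hΦsmooth.continuous
  -- D is a null set
  have hDnull : volume D = 0 := by
    rw [hD]
    have : {x : Fin n → ℝ | eval x f = 0 ∨ eval x g = 0} =
        {x | eval x f = 0} ∪ {x | eval x g = 0} := by ext x; simp [Set.mem_union]
    rw [this]
    exact measure_union_null (zero_locus_null n f hf) (zero_locus_null n g hg)
  have hrestr : (volume : Measure (Fin n → ℝ)).restrict Dᶜ = volume := by
    rw [Measure.restrict_congr_set (MeasureTheory.ae_eq_univ.2 (by rwa [compl_compl])),
      Measure.restrict_univ]
  -- support bound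
  obtain ⟨R₀, hR₀⟩ := hΦc.isBounded.subset_closedBall 0
  set R : ℝ := max R₀ 1 with hRdef
  have hR1 : (1:ℝ) ≤ R := le_max_right _ _
  have hR0 : (0:ℝ) < R := by linarith
  have hKR : ∀ x, x ∈ tsupport Φ → ∀ i, |x i| ≤ R := by
    intro x hx i
    have h1 : x ∈ Metric.closedBall 0 R := by
      have := hR₀ hx
      exact Metric.closedBall_subset_closedBall (le_max_left _ _) this
    rw [Metric.mem_closedBall] at h1
    calc |x i| = dist (x i) 0 := by rw [Real.dist_eq, sub_zero]
      _ ≤ dist x 0 := dist_le_pi_dist x 0 i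
      _ ≤ R := h1
  -- bound for f on the support
  obtain ⟨M₀, hM₀⟩ := hΦc.isCompact.exists_bound_of_continuousOn
    ((MvPolynomial.continuous_eval f).continuousOn)
  set M : ℝ := max M₀ 1 with hMdef
  have hM1 : (1:ℝ) ≤ M := le_max_right _ _
  have hMb : ∀ x ∈ tsupport Φ, |eval x f| ≤ M :=
    fun x hx => le_trans (hM₀ x hx) (le_max_left _ _)
  -- bound for Φ
  obtain ⟨B₀, hB₀⟩ := hΦcont.bounded_above_of_compact_support hΦc
  set B : ℝ := max B₀ 1 with hBdef
  have hB1 : (1:ℝ) ≤ B := le_max_right _ _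
  have hBb : ∀ x, ‖Φ x‖ ≤ B := fun x => le_trans (hB₀ x) (le_max_left _ _)
  -- sublevel estimate for g
  obtain ⟨Cg, βg, hCg, hβg, hβg1, hsub⟩ := mv_sublevel n g hg R hR1
  -- integrability
  have hΦint : Integrable Φ := hΦcont.integrable_of_hasCompactSupport hΦc
  set eterm : ℝ → (Fin n → ℝ) → ℂ := fun z x =>
    Complex.exp (2 * Real.pi * Complex.I * ((z * (eval x f / eval x g) : ℝ) : ℂ)) with het
  have hmeas_e : ∀ z, Measurable (eterm z) := by
    intro z
    apply Complex.continuous_exp.measurable.comp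
    apply Measurable.const_mul
    apply Complex.measurable_ofReal.comp
    exact ((measurable_const.mul (((MvPolynomial.continuous_eval f).measurable).div
      ((MvPolynomial.continuous_eval g).measurable))))
  have hnorm_e : ∀ z x, ‖eterm z x‖ = 1 := by
    intro z x
    rw [het]
    show ‖_‖ = 1
    rw [Complex.norm_exp]
    have : (2 * Real.pi * Complex.I * ((z * (eval x f / eval x g) : ℝ) : ℂ)).re = 0 := by simp
    rw [this, Real.exp_zero]
  have hint : ∀ z, Integrable (fun x => Φ x * eterm z x) := by
    intro z
    apply Integrable.mono' hΦint.norm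
      ((hΦcont.aestronglyMeasurable).mul (hmeas_e z).aestronglyMeasurable)
    filter_upwards with x
    show ‖Φ x * eterm z x‖ ≤ ‖Φ x‖
    rw [norm_mul, hnorm_e z x, mul_one]
  -- rewrite E
  have hEeq : ∀ z, E z = ∫ x, Φ x * eterm z x := by
    intro z; rw [hE z, hrestr]
  have hπ : (0:ℝ) < Real.pi := Real.pi_pos
  set α : ℝ := min ((1/2)*βg) (1/2) with hα
  set CC : ℝ := 2*B*Cg + 4*Real.pi*B*M*(2*R)^n + 1 with hCC
  refine ⟨α, 1, CC, lt_min (by linarith) (by norm_num), le_refl 1, by positivity, ?_⟩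
  intro z hz hz2
  simp only [Nat.sub_self, pow_zero, mul_one]
  set ε : ℝ := |z| ^ ((1:ℝ)/2) with hεdef
  have hεpos : 0 < ε := Real.rpow_pos_of_pos hz _
  have hε1 : ε ≤ 1 := Real.rpow_le_one (abs_nonneg z) (by linarith) (by norm_num)
  have hεε : ε * ε = |z| := by
    rw [hεdef, ← Real.rpow_add hz]; norm_num
  have hzε : |z|/ε = ε := by rw [div_eq_iff (ne_of_gt hεpos), hεε]
  set c2 : ℝ := 4*Real.pi*B*M*(|z|/ε) with hc2
  have hc2pos : 0 < c2 := by rw [hc2, hzε]; positivity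
  set Box : Set (Fin n → ℝ) := {x | ∀ i, |x i| ≤ R} with hBox
  set A : Set (Fin n → ℝ) := {x | |eval x g| ≤ ε} with hA
  have hAmeas : MeasurableSet A :=
    measurableSet_le (MvPolynomial.continuous_eval g).measurable.abs measurable_const
  have hBoxmeas : MeasurableSet Box := meas_box n R
  have hBoxfin : volume Box < ⊤ := by
    rw [hBox, box_volume n R hR0.le]; exact ENNReal.ofReal_lt_top
  have hdiff : E z - ∫ x, Φ x = ∫ x, Φ x * (eterm z x - 1) := by
    rw [hEeq z, ← integral_sub (hint z) hΦint]
    congr 1; ext x; ring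
  have h_pt : ∀ x, ‖Φ x * (eterm z x - 1)‖ ≤
      (Box ∩ A).indicator (fun _ => 2*B) x + (Box ∩ Aᶜ).indicator (fun _ => c2) x := by
    intro x
    by_cases hK : x ∈ tsupport Φ
    · have hxbox : x ∈ Box := hKR x hK
      by_cases hxA : x ∈ A
      · rw [Set.indicator_of_mem (Set.mem_inter hxbox hxA),
          Set.indicator_of_notMem (fun h => h.2 hxA)]
        rw [add_zero, norm_mul]
        have h1 : ‖eterm z x - 1‖ ≤ 2 := by
          calc ‖eterm z x - 1‖ ≤ ‖eterm z x‖ + ‖(1:ℂ)‖ := norm_sub_le _ _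
            _ = 2 := by rw [hnorm_e z x]; norm_num
        calc ‖Φ x‖ * ‖eterm z x - 1‖ ≤ B * 2 :=
            mul_le_mul (hBb x) h1 (norm_nonneg _) (by linarith)
          _ = 2*B := by ring
      · rw [Set.indicator_of_notMem (fun h => hxA h.2),
          Set.indicator_of_mem (Set.mem_inter hxbox hxA), zero_add, norm_mul]
        have hxA' : ε < |eval x g| := by
          simp only [hA, Set.mem_setOf_eq, not_le] at hxA; exact hxA
        have hgne : (0:ℝ) < |eval x g| := lt_trans hεpos hxA'
        have h1 : ‖eterm z x - 1‖ ≤ 2 * (2 * Real.pi * |z * (eval x f / eval x g)|) := by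
          rw [het]
          exact norm_exp_I_sub_one_le _
        have h2 : |z * (eval x f / eval x g)| ≤ |z| * M / ε := by
          rw [abs_mul, abs_div]
          have hd : |eval x f| / |eval x g| ≤ M / ε :=
            div_le_div₀ (by linarith) (hMb x hK) hεpos hxA'.le
          calc |z| * (|eval x f| / |eval x g|) ≤ |z| * (M / ε) :=
              mul_le_mul_of_nonneg_left hd (abs_nonneg z)
            _ = |z| * M / ε := by ring
        have h1' : ‖eterm z x - 1‖ ≤ 2 * (2 * Real.pi * (|z| * M / ε)) := by
          refine le_trans h1 ?_
          nlinarith [h2, hπ]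
        calc ‖Φ x‖ * ‖eterm z x - 1‖
            ≤ B * (2 * (2 * Real.pi * (|z| * M / ε))) :=
              mul_le_mul (hBb x) h1' (norm_nonneg _) (by linarith)
          _ = c2 := by rw [hc2]; field_simp; ring
    · have : Φ x = 0 := image_eq_zero_of_notMem_tsupport hK
      rw [this, zero_mul, norm_zero]
      apply add_nonneg <;>
        exact Set.indicator_nonneg (fun _ _ => by positivity) _
  -- integrability of the two sides
  have hint1 : Integrable (fun x => Φ x * (eterm z x - 1)) := by
    have : (fun x => Φ x * (eterm z x - 1)) = fun x => Φ x * eterm z x - Φ x := by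
      ext x; ring
    rw [this]; exact (hint z).sub hΦint
  have hind1 : Integrable ((Box ∩ A).indicator (fun _ => (2*B : ℝ))) := by
    rw [integrable_indicator_iff (hBoxmeas.inter hAmeas)]
    exact integrableOn_const (lt_of_le_of_lt (measure_mono Set.inter_subset_left) hBoxfin).ne
  have hind2 : Integrable ((Box ∩ Aᶜ).indicator (fun _ => (c2 : ℝ))) := by
    rw [integrable_indicator_iff (hBoxmeas.inter hAmeas.compl)]
    exact integrableOn_const (lt_of_le_of_lt (measure_mono Set.inter_subset_left) hBoxfin).ne
  have hvol1 : (volume (Box ∩ A)).toReal ≤ Cg * ε ^ βg := by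
    apply ENNReal.toReal_le_of_le_ofReal (by positivity)
    have : Box ∩ A = {x : Fin n → ℝ | (∀ i, |x i| ≤ R) ∧ |eval x g| ≤ ε} := by
      ext x; simp [hBox, hA, Set.mem_inter_iff, Set.mem_setOf_eq]
    rw [this]; exact hsub ε hεpos
  have hvol2 : (volume (Box ∩ Aᶜ)).toReal ≤ (2*R)^n := by
    apply ENNReal.toReal_le_of_le_ofReal (by positivity)
    exact le_trans (measure_mono Set.inter_subset_left) (le_of_eq (box_volume n R hR0.le))
  calc ‖E z - ∫ x, Φ x‖ = ‖∫ x, Φ x * (eterm z x - 1)‖ := by rw [hdiff]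
    _ ≤ ∫ x, ‖Φ x * (eterm z x - 1)‖ := norm_integral_le_integral_norm _
    _ ≤ ∫ x, ((Box ∩ A).indicator (fun _ => 2*B) x + (Box ∩ Aᶜ).indicator (fun _ => c2) x) :=
        integral_mono hint1.norm (hind1.add hind2) h_pt
    _ = (volume (Box ∩ A)).toReal * (2*B) + (volume (Box ∩ Aᶜ)).toReal * c2 := by
        rw [integral_add hind1 hind2, integral_indicator_const _ (hBoxmeas.inter hAmeas),
          integral_indicator_const _ (hBoxmeas.inter hAmeas.compl), smul_eq_mul, smul_eq_mul]
        rfl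
    _ ≤ (Cg * ε ^ βg) * (2*B) + (2*R)^n * c2 := by
        gcongr
    _ ≤ CC * |z| ^ α := by
        have hεβ : ε ^ βg = |z| ^ ((1/2)*βg) := by
          rw [hεdef, ← Real.rpow_mul (abs_nonneg z)]
        have h1 : |z| ^ ((1/2)*βg) ≤ |z| ^ α :=
          Real.rpow_le_rpow_of_exponent_ge hz (by linarith) (min_le_left _ _)
        have h2 : ε ≤ |z| ^ α := by
          rw [hεdef]
          exact Real.rpow_le_rpow_of_exponent_ge hz (by linarith) (min_le_right _ _)
        have hzα : 0 ≤ |z| ^ α := Real.rpow_nonneg (abs_nonneg z) _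
        rw [hc2, hzε, hεβ, hCC]
        nlinarith [mul_le_mul_of_nonneg_left h1 (by positivity : (0:ℝ) ≤ 2*B*Cg),
          mul_le_mul_of_nonneg_left h2 (by positivity : (0:ℝ) ≤ 4*Real.pi*B*M*(2*R)^n), hzα]
end
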